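/- If the constructed graph H admits a b-coloring with k = 2W + 3m + n + 2 colors, then (G, w) admits a circulating orientation. -/

import Mathlib

open Finset

/-- `a` is a b-vertex of the coloring `c`: it has a neighbor in every color class
other than its own. -/
def IsBVertex {VH : Type*} (H : SimpleGraph VH) {k : ℕ} (c : VH → Fin k) (a : VH) : Prop :=
  ∀ col : Fin k, col ≠ c a → ∃ b : VH, H.Adj a b ∧ c b = col

/-- `c` is a b-coloring of `H` with `k` colors: a proper coloring using all `k` colors
in which every color class contains a b-vertex. -/
def IsBColoring {VH : Type*} (H : SimpleGraph VH) (k : ℕ) (c : VH → Fin k) : Prop :=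
  (∀ ⦃a b : VH⦄, H.Adj a b → c a ≠ c b) ∧ Function.Surjective c ∧
    ∀ col : Fin k, ∃ a : VH, c a = col ∧ IsBVertex H c a

variable {V : Type*} [Fintype V] [DecidableEq V]

/-- `W`, the total weight of all edges. -/
def totW (G : SimpleGraph V) [DecidableRel G.Adj] (wt : Sym2 V → ℕ) : ℕ :=
  ∑ e ∈ G.edgeFinset, wt e

/-- `W_v`, the total weight of the edges incident with `v`. -/
def vertW (G : SimpleGraph V) [DecidableRel G.Adj] (wt : Sym2 V → ℕ) (v : V) : ℕ :=
  ∑ e ∈ G.edgeFinset.filter (fun e => v ∈ e), wt e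

/-- `k = 2W + 3m + n + 2`. -/
def numColors (G : SimpleGraph V) [DecidableRel G.Adj] (wt : Sym2 V → ℕ) : ℕ :=
  2 * totW G wt + 3 * G.edgeFinset.card + Fintype.card V + 2

/-- An orientation of `(G, wt)` (given by choosing a head `o e ∈ e` for every edge `e`)
is circulating if, at every vertex, the entering weight equals the leaving weight. -/
def IsCirculating (G : SimpleGraph V) [DecidableRel G.Adj] (wt : Sym2 V → ℕ)
    (o : Sym2 V → V) : Prop :=
  (∀ e ∈ G.edgeFinset, o e ∈ e) ∧
    ∀ v : V,
      ∑ e ∈ G.edgeFinset.filter (fun e => v ∈ e ∧ o e = v), wt e =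
        ∑ e ∈ G.edgeFinset.filter (fun e => v ∈ e ∧ o e ≠ v), wt e

/-- The data of the construction of the graph `H` from `(G, wt)`. -/
structure GadgetData (V : Type*) [Fintype V] [DecidableEq V]
    (G : SimpleGraph V) [DecidableRel G.Adj] (wt : Sym2 V → ℕ) where
  /-- the vertex type of `H` -/
  VH : Type*
  fintypeVH : Fintype VH
  decEqVH : DecidableEq VH
  /-- the graph `H` -/
  H : SimpleGraph VH
  decAdj : DecidableRel H.Adj
  /-- the center `s*` of the superstar -/
  sstar : VH
  /-- the leaves of the superstar -/
  Sleaves : Finset VH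
  /-- the centers of the anonymous stars -/
  Acenters : Finset VH
  /-- the leaves of each anonymous star -/
  Aleaves : VH → Finset VH
  /-- the sets `L_{e,v}` (subsets of the superstar leaves) -/
  L : Sym2 V → V → Finset VH
  /-- the copy of a vertex of `G` inside `H` -/
  orig : V → VH
  /-- the sets `P_v` -/
  P : V → Finset VH
  /-- the vertices `x_{e,v}` -/
  x : Sym2 V → V → VH
  /-- the sets `Y_e` -/
  Y : Sym2 V → Finset VH
  /-- the sets `Z_e` -/
  Z : Sym2 V → Finset VH
  /-- the vertices `q_{e,1}, q_{e,2}` -/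
  q : Sym2 V → Fin 2 → VH

namespace GadgetData

variable {G : SimpleGraph V} [DecidableRel G.Adj] {wt : Sym2 V → ℕ}

/-- The set `X = {x_{e,v} : v ∈ e ∈ E(G)}`. -/
def Xset (g : GadgetData V G wt) : Finset g.VH :=
  letI := g.fintypeVH; letI := g.decEqVH
  G.edgeFinset.biUnion fun e => (Finset.univ.filter fun v => v ∈ e).image (g.x e)

/-- The set `Q = {q_{e,1}, q_{e,2} : e ∈ E(G)}`. -/
def Qset (g : GadgetData V G wt) : Finset g.VH :=
  letI := g.decEqVH
  G.edgeFinset.biUnion fun e => {g.q e 0, g.q e 1}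

/-- The parts into which the vertex set of `H` is partitioned. -/
def parts (g : GadgetData V G wt) : List (Finset g.VH) :=
  letI := g.fintypeVH; letI := g.decEqVH
  [{g.sstar}, g.Sleaves, g.Acenters, g.Acenters.biUnion g.Aleaves,
    Finset.univ.image g.orig, Finset.univ.biUnion g.P,
    g.Xset, G.edgeFinset.biUnion g.Y, G.edgeFinset.biUnion g.Z, g.Qset]

/-- One directional specification of the adjacencies of `H`. -/
def AdjSpec (g : GadgetData V G wt) (a b : g.VH) : Prop :=
  (a = g.sstar ∧ b ∈ g.Sleaves) ∨
  (∃ s ∈ g.Acenters, a = s ∧ b ∈ g.Aleaves s) ∨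
  (∃ v : V, a = g.orig v ∧ b ∈ g.P v) ∨
  (∃ e ∈ G.edgeFinset, ∃ v : V, v ∈ e ∧ a = g.orig v ∧ (b ∈ g.L e v ∨ b ∈ g.Y e)) ∨
  (∃ e ∈ G.edgeFinset, ∃ v : V, v ∈ e ∧ a = g.x e v ∧
    (b ∈ g.Y e ∨ b ∈ g.Z e ∨ b ∈ g.L e v)) ∨
  (∃ e ∈ G.edgeFinset, a = g.q e 0 ∧ b = g.q e 1) ∨
  (∃ e ∈ G.edgeFinset, ∃ h : Fin 2, a = g.q e h ∧
    (b ∈ g.Z e ∨ (∃ v : V, v ∈ e ∧ b ∈ g.L e v) ∨ (∃ v : V, v ∈ e ∧ b = g.x e v)))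

/-- Degree in `H`. -/
def deg (g : GadgetData V G wt) (a : g.VH) : ℕ :=
  letI := g.fintypeVH; letI := g.decEqVH; letI := g.decAdj
  g.H.degree a

/-- The set `{s*} ∪ V(G) ∪ Q ∪ A ∪ X`. -/
def bigSet (g : GadgetData V G wt) : Finset g.VH :=
  letI := g.fintypeVH; letI := g.decEqVH
  {g.sstar} ∪ Finset.univ.image g.orig ∪ g.Qset ∪ g.Acenters ∪ g.Xset

end GadgetData

/-- The construction of the graph `H` from `(G, wt)`: the data together with all the
requirements (sizes of the parts, their disjointness, and the adjacency relation). -/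
structure Gadget (V : Type*) [Fintype V] [DecidableEq V]
    (G : SimpleGraph V) [DecidableRel G.Adj] (wt : Sym2 V → ℕ)
    extends GadgetData V G wt where
  card_Sleaves : Sleaves.card = numColors G wt - 1
  card_Acenters : Acenters.card = 2 * totW G wt + 1
  card_Aleaves : ∀ s ∈ Acenters, (Aleaves s).card = numColors G wt - 1
  Aleaves_disjoint : ∀ s ∈ Acenters, ∀ s' ∈ Acenters, s ≠ s' →
    Disjoint (Aleaves s) (Aleaves s')
  L_subset : ∀ e ∈ G.edgeFinset, ∀ v ∈ e, L e v ⊆ Sleaves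
  card_L : ∀ e ∈ G.edgeFinset, ∀ v ∈ e, (L e v).card = wt e
  L_disjoint : ∀ e ∈ G.edgeFinset, ∀ v ∈ e, ∀ e' ∈ G.edgeFinset, ∀ v' ∈ e',
    (e, v) ≠ (e', v') → Disjoint (L e v) (L e' v')
  card_P : ∀ v : V, 2 * (P v).card + 3 * vertW G wt v + 2 = 2 * numColors G wt
  card_Y : ∀ e ∈ G.edgeFinset, (Y e).card = wt e
  card_Z : ∀ e ∈ G.edgeFinset, (Z e).card + 2 * wt e + 3 = numColors G wt
  orig_inj : Function.Injective orig
  P_disjoint : ∀ v v' : V, v ≠ v' → Disjoint (P v) (P v')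
  x_inj : ∀ e ∈ G.edgeFinset, ∀ v ∈ e, ∀ e' ∈ G.edgeFinset, ∀ v' ∈ e',
    x e v = x e' v' → (e, v) = (e', v')
  Y_disjoint : ∀ e ∈ G.edgeFinset, ∀ e' ∈ G.edgeFinset, e ≠ e' → Disjoint (Y e) (Y e')
  Z_disjoint : ∀ e ∈ G.edgeFinset, ∀ e' ∈ G.edgeFinset, e ≠ e' → Disjoint (Z e) (Z e')
  q_inj : ∀ e ∈ G.edgeFinset, ∀ h : Fin 2, ∀ e' ∈ G.edgeFinset, ∀ h' : Fin 2,
    q e h = q e' h' → (e, h) = (e', h')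
  parts_disjoint : toGadgetData.parts.Pairwise Disjoint
  parts_cover : ∀ a : VH, ∃ p ∈ toGadgetData.parts, a ∈ p
  adj_iff : ∀ a b : VH, H.Adj a b ↔
    toGadgetData.AdjSpec a b ∨ toGadgetData.AdjSpec b a

/-! In a b-colouring of `H` with `k` colours, the leaves of all stars and the vertices of `P`,
`Y` and `Z` have fewer than `k - 1` neighbours, so every b-vertex lies in
`{s*} ∪ A ∪ V(G) ∪ X ∪ Q`. At most three of `x_{e,u}, x_{e,v}, q_{e,1}, q_{e,2}` are b-vertices:
if both `x_{e,u}` and `x_{e,v}` are, their neighbourhoods are rainbow, and then no colour of `Y_e`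
is visible from `q_{e,h}`. Since `|{s*} ∪ A ∪ V(G)| = k - 3m`, all these bounds are attained.

Orient `e` towards an endpoint `u` for which `x_{e,u}` is a b-vertex. For the tail `v` the
colours of `Y_e` already occur on `L_{e,v}`, so the b-vertex `v` sees at most
`|P_v| + 2 W_v - out(v)` colours besides its own. As `|P_v| = k - 1 - 3 W_v / 2`, this gives
`2 out(v) ≤ W_v`, and summing over all vertices forces equality everywhere. -/

namespace IsBVertex

variable {VH : Type*} {H : SimpleGraph VH} {k : ℕ} {c : VH → Fin k} {a : VH}
  {s : Finset VH}

theorem erase_subset_image (hb : IsBVertex H c a) (hs : ∀ b, H.Adj a b → b ∈ s) :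
    univ.erase (c a) ⊆ s.image c := by
  intro col hcol
  obtain ⟨b, hab, rfl⟩ := hb col (ne_of_mem_erase hcol)
  exact mem_image_of_mem c (hs b hab)

theorem sub_one_le_card_image (hb : IsBVertex H c a) (hs : ∀ b, H.Adj a b → b ∈ s) :
    k - 1 ≤ (s.image c).card := by
  simpa using card_le_card (hb.erase_subset_image hs)

theorem sub_one_le_card (hb : IsBVertex H c a) (hs : ∀ b, H.Adj a b → b ∈ s) :
    k - 1 ≤ s.card :=
  (hb.sub_one_le_card_image hs).trans card_image_le

theorem injOn_of_card_add_one_eq (hb : IsBVertex H c a) (hs : ∀ b, H.Adj a b → b ∈ s)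
    (hcard : s.card + 1 = k) : Set.InjOn c s := by
  have := hb.sub_one_le_card_image hs
  exact card_image_iff.1 (le_antisymm card_image_le (by omega))

end IsBVertex

theorem Finset.sum_sum_filter_eq_sum_card_filter_mul {α β : Type*} [Fintype α] (s : Finset β)
    (p : α → β → Prop) [∀ a b, Decidable (p a b)] (f : β → ℕ) :
    ∑ a, ∑ b ∈ s.filter (p a), f b = ∑ b ∈ s, (univ.filter (p · b)).card * f b := by
  rw [Finset.sum_comm' (t' := s) (s' := fun b => univ.filter (p · b)) (by simp [and_comm])]
  simp

section Orientation

variable {G : SimpleGraph V} [DecidableRel G.Adj] {wt : Sym2 V → ℕ} {o : Sym2 V → V}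

def outW (G : SimpleGraph V) [DecidableRel G.Adj] (wt : Sym2 V → ℕ) (o : Sym2 V → V)
    (v : V) : ℕ :=
  ∑ e ∈ G.edgeFinset.filter (fun e => v ∈ e ∧ o e ≠ v), wt e

theorem SimpleGraph.card_filter_mem_edge {e : Sym2 V} (he : e ∈ G.edgeFinset) :
    (univ.filter (· ∈ e)).card = 2 := by
  rw [show univ.filter (· ∈ e) = e.toFinset by ext; simp [Sym2.mem_toFinset],
    Sym2.card_toFinset_of_not_isDiag]
  exact G.not_isDiag_of_mem_edgeSet (SimpleGraph.mem_edgeFinset.1 he)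

theorem sum_vertW : ∑ v, vertW G wt v = 2 * totW G wt := by
  rw [totW, mul_sum]
  unfold vertW
  rw [sum_sum_filter_eq_sum_card_filter_mul _ (fun v e => v ∈ e)]
  exact sum_congr rfl fun e he => by rw [SimpleGraph.card_filter_mem_edge he]

theorem sum_outW (ho : ∀ e ∈ G.edgeFinset, o e ∈ e) : ∑ v, outW G wt o v = totW G wt := by
  unfold outW totW
  rw [sum_sum_filter_eq_sum_card_filter_mul _ (fun v e => v ∈ e ∧ o e ≠ v)]
  refine sum_congr rfl fun e he => ?_
  have : univ.filter (fun v => v ∈ e ∧ o e ≠ v) = (univ.filter (· ∈ e)).erase (o e) := by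
    ext v; simp [and_comm, eq_comm]
  rw [this, card_erase_of_mem (by simpa using ho e he), SimpleGraph.card_filter_mem_edge he]
  simp

theorem isCirculating_of_two_mul_outW_le (ho : ∀ e ∈ G.edgeFinset, o e ∈ e)
    (h : ∀ v, 2 * outW G wt o v ≤ vertW G wt v) : IsCirculating G wt o := by
  have heq : ∀ v, 2 * outW G wt o v = vertW G wt v := by
    refine fun v => (sum_eq_sum_iff_of_le fun v _ => h v).1 ?_ v (mem_univ v)
    rw [← mul_sum, sum_outW ho, sum_vertW]
  refine ⟨ho, fun v => ?_⟩
  have hsplit := sum_filter_add_sum_filter_not (G.edgeFinset.filter (v ∈ ·)) (o · = v) wt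
  simp only [filter_filter] at hsplit
  have := heq v
  simp only [outW, vertW, ne_eq] at this ⊢
  omega

end Orientation

namespace GadgetData

variable {G : SimpleGraph V} [DecidableRel G.Adj] {wt : Sym2 V → ℕ}

instance (g : GadgetData V G wt) : Fintype g.VH := g.fintypeVH
instance (g : GadgetData V G wt) : DecidableEq g.VH := g.decEqVH
instance (g : GadgetData V G wt) : DecidableRel g.H.Adj := g.decAdj

end GadgetData

namespace Gadget

variable {G : SimpleGraph V} [DecidableRel G.Adj] {wt : Sym2 V → ℕ} (g : Gadget V G wt)
  {a b : g.VH} {e : Sym2 V} {u v : V} {c : g.VH → Fin (numColors G wt)}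

/-- Part `i` is the `i`-th entry of `GadgetData.parts`: `0` is `{s*}`, `1` the leaves of
`S*` (containing every `L_{e,v}`), `2` the set `A`, `3` the leaves of the anonymous stars,
`4` the copy of `V(G)`, then `5` `P`, `6` `X`, `7` `Y`, `8` `Z` and `9` `Q`. -/
def part (i : Fin 10) : Finset g.VH := g.parts.get (i.cast rfl)

theorem part_disjoint {i j : Fin 10} (hij : i ≠ j) : Disjoint (g.part i) (g.part j) := by
  have h := List.pairwise_iff_get.1 g.parts_disjoint
  rcases lt_or_gt_of_ne hij with hij | hij
  · exact h _ _ hij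
  · exact (h _ _ hij).symm

theorem exists_mem_part (a : g.VH) : ∃ i, a ∈ g.part i := by
  obtain ⟨p, hp, ha⟩ := g.parts_cover a
  obtain ⟨i, rfl⟩ := List.mem_iff_get.1 hp
  exact ⟨i.cast rfl, ha⟩

noncomputable def partIdx (a : g.VH) : Fin 10 := (g.exists_mem_part a).choose

theorem mem_part_partIdx (a : g.VH) : a ∈ g.part (g.partIdx a) :=
  (g.exists_mem_part a).choose_spec

theorem partIdx_eq_of_mem {i : Fin 10} (h : a ∈ g.part i) : g.partIdx a = i := by
  by_contra hne
  exact disjoint_left.1 (g.part_disjoint hne) (g.mem_part_partIdx a) h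

theorem partIdx_sstar : g.partIdx g.sstar = 0 := g.partIdx_eq_of_mem (mem_singleton_self _)

theorem partIdx_of_mem_Sleaves (h : a ∈ g.Sleaves) : g.partIdx a = 1 := g.partIdx_eq_of_mem h

theorem partIdx_of_mem_Acenters (h : a ∈ g.Acenters) : g.partIdx a = 2 := g.partIdx_eq_of_mem h

theorem partIdx_of_mem_Aleaves {s : g.VH} (hs : s ∈ g.Acenters) (h : a ∈ g.Aleaves s) :
    g.partIdx a = 3 := g.partIdx_eq_of_mem (mem_biUnion.2 ⟨s, hs, h⟩)

theorem partIdx_orig (v : V) : g.partIdx (g.orig v) = 4 :=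
  g.partIdx_eq_of_mem (mem_image_of_mem _ (mem_univ v))

theorem partIdx_of_mem_P (h : a ∈ g.P v) : g.partIdx a = 5 :=
  g.partIdx_eq_of_mem (mem_biUnion.2 ⟨v, mem_univ v, h⟩)

theorem partIdx_x (he : e ∈ G.edgeFinset) (hu : u ∈ e) : g.partIdx (g.x e u) = 6 :=
  g.partIdx_eq_of_mem <|
    mem_biUnion.2 ⟨e, he, mem_image_of_mem _ (mem_filter.2 ⟨mem_univ u, hu⟩)⟩

theorem partIdx_of_mem_Y (he : e ∈ G.edgeFinset) (h : a ∈ g.Y e) : g.partIdx a = 7 :=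
  g.partIdx_eq_of_mem (mem_biUnion.2 ⟨e, he, h⟩)

theorem partIdx_of_mem_Z (he : e ∈ G.edgeFinset) (h : a ∈ g.Z e) : g.partIdx a = 8 :=
  g.partIdx_eq_of_mem (mem_biUnion.2 ⟨e, he, h⟩)

theorem partIdx_q (he : e ∈ G.edgeFinset) (i : Fin 2) : g.partIdx (g.q e i) = 9 :=
  g.partIdx_eq_of_mem (mem_biUnion.2 ⟨e, he, by fin_cases i <;> simp⟩)

theorem partIdx_of_mem_L (he : e ∈ G.edgeFinset) (hv : v ∈ e) (h : a ∈ g.L e v) :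
    g.partIdx a = 1 :=
  g.partIdx_of_mem_Sleaves (g.L_subset e he v hv h)

/-- The parts that the construction joins to part `i` by some edge of `H`. -/
def partNbrs : Fin 10 → Finset (Fin 10) :=
  ![{1}, {0, 4, 6, 9}, {3}, {2}, {1, 5, 7}, {4}, {1, 7, 8, 9}, {4, 6}, {6, 9}, {1, 6, 8, 9}]

theorem adjSpec_partIdx (h : g.AdjSpec a b) :
    g.partIdx b ∈ partNbrs (g.partIdx a) ∧ g.partIdx a ∈ partNbrs (g.partIdx b) := by
  rcases h with ⟨rfl, hb⟩ | ⟨s, hs, rfl, hb⟩ | ⟨v, rfl, hb⟩ |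
    ⟨e, he, v, hv, rfl, hb | hb⟩ | ⟨e, he, v, hv, rfl, hb | hb | hb⟩ |
    ⟨e, he, rfl, rfl⟩ | ⟨e, he, i, rfl, hb | ⟨v, hv, hb⟩ | ⟨v, hv, rfl⟩⟩
  · rw [g.partIdx_sstar, g.partIdx_of_mem_Sleaves hb]; decide
  · rw [g.partIdx_of_mem_Acenters hs, g.partIdx_of_mem_Aleaves hs hb]; decide
  · rw [g.partIdx_orig, g.partIdx_of_mem_P hb]; decide
  · rw [g.partIdx_orig, g.partIdx_of_mem_L he hv hb]; decide
  · rw [g.partIdx_orig, g.partIdx_of_mem_Y he hb]; decide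
  · rw [g.partIdx_x he hv, g.partIdx_of_mem_Y he hb]; decide
  · rw [g.partIdx_x he hv, g.partIdx_of_mem_Z he hb]; decide
  · rw [g.partIdx_x he hv, g.partIdx_of_mem_L he hv hb]; decide
  · simp only [g.partIdx_q he]; decide
  · rw [g.partIdx_q he, g.partIdx_of_mem_Z he hb]; decide
  · rw [g.partIdx_q he, g.partIdx_of_mem_L he hv hb]; decide
  · rw [g.partIdx_q he, g.partIdx_x he hv]; decide

theorem partIdx_mem_partNbrs_of_adj (h : g.H.Adj a b) : g.partIdx b ∈ partNbrs (g.partIdx a) :=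
  ((g.adj_iff a b).1 h).elim (fun h => (g.adjSpec_partIdx h).1) (fun h => (g.adjSpec_partIdx h).2)

theorem card_Xset_le : g.Xset.card ≤ 2 * G.edgeFinset.card := by
  refine card_biUnion_le.trans ?_
  rw [mul_comm, ← smul_eq_mul, ← sum_const]
  exact sum_le_sum fun e he => card_image_le.trans (SimpleGraph.card_filter_mem_edge he).le

theorem card_Qset_le : g.Qset.card ≤ 2 * G.edgeFinset.card := by
  refine card_biUnion_le.trans ?_
  rw [mul_comm, ← smul_eq_mul, ← sum_const]
  exact sum_le_sum fun e _ => card_le_two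

theorem sum_card_partNbrs_add_one_lt (hwt : ∀ e ∈ G.edgeFinset, 1 ≤ wt e)
    (hE : G.edgeFinset.Nonempty) {i : Fin 10} (hi : i ∈ ({1, 3, 5, 7, 8} : Finset (Fin 10))) :
    ∑ j ∈ partNbrs i, (g.part j).card + 1 < numColors G wt := by
  have h0 : (g.part 0).card = 1 := card_singleton _
  have h2 : (g.part 2).card = 2 * totW G wt + 1 := g.card_Acenters
  have h4 : (g.part 4).card ≤ Fintype.card V := card_image_le.trans_eq card_univ
  have h6 : (g.part 6).card ≤ 2 * G.edgeFinset.card := g.card_Xset_le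
  have h9 : (g.part 9).card ≤ 2 * G.edgeFinset.card := g.card_Qset_le
  have hm : G.edgeFinset.card ≤ totW G wt := by
    simpa [totW] using G.edgeFinset.card_nsmul_le_sum wt 1 hwt
  have hm1 := hE.card_pos
  simp only [mem_insert, mem_singleton] at hi
  rcases hi with rfl | rfl | rfl | rfl | rfl <;>
    simp [partNbrs, numColors] <;> omega

theorem not_isBVertex_of_partIdx (hwt : ∀ e ∈ G.edgeFinset, 1 ≤ wt e)
    (hE : G.edgeFinset.Nonempty) {c : g.VH → Fin (numColors G wt)}
    (ha : g.partIdx a ∈ ({1, 3, 5, 7, 8} : Finset (Fin 10))) : ¬ IsBVertex g.H c a := by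
  intro hb
  have := hb.sub_one_le_card (s := (partNbrs (g.partIdx a)).biUnion g.part)
    fun b hab => mem_biUnion.2 ⟨_, g.partIdx_mem_partNbrs_of_adj hab, g.mem_part_partIdx b⟩
  have := g.sum_card_partNbrs_add_one_lt hwt hE ha
  have := card_biUnion_le (s := partNbrs (g.partIdx a)) (t := g.part)
  omega

theorem adjSpec_cases_of_partIdx_right (h : g.AdjSpec b a)
    (ha : g.partIdx a ∈ ({4, 6, 9} : Finset (Fin 10))) :
    (∃ e ∈ G.edgeFinset, b = g.q e 0 ∧ a = g.q e 1) ∨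
      ∃ e ∈ G.edgeFinset, ∃ i, b = g.q e i ∧ ∃ w ∈ e, a = g.x e w := by
  rcases h with ⟨-, h⟩ | ⟨s, hs, -, h⟩ | ⟨w, -, h⟩ | ⟨e, he, w, hw, -, h | h⟩ |
    ⟨e, he, w, hw, -, h | h | h⟩ | ⟨e, he, hb, ha'⟩ |
    ⟨e, he, i, hb, h | ⟨w, hw, h⟩ | ⟨w, hw, h⟩⟩
  · simp [g.partIdx_of_mem_Sleaves h] at ha
  · simp [g.partIdx_of_mem_Aleaves hs h] at ha
  · simp [g.partIdx_of_mem_P h] at ha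
  · simp [g.partIdx_of_mem_L he hw h] at ha
  · simp [g.partIdx_of_mem_Y he h] at ha
  · simp [g.partIdx_of_mem_Y he h] at ha
  · simp [g.partIdx_of_mem_Z he h] at ha
  · simp [g.partIdx_of_mem_L he hw h] at ha
  · exact .inl ⟨e, he, hb, ha'⟩
  · simp [g.partIdx_of_mem_Z he h] at ha
  · simp [g.partIdx_of_mem_L he hw h] at ha
  · exact .inr ⟨e, he, i, hb, w, hw, h⟩

theorem adj_x_of_mem_Y (he : e ∈ G.edgeFinset) (hu : u ∈ e) (hb : b ∈ g.Y e) :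
    g.H.Adj (g.x e u) b :=
  (g.adj_iff _ _).2 <| .inl <| .inr <| .inr <| .inr <| .inr <| .inl ⟨e, he, u, hu, rfl, .inl hb⟩

theorem mem_of_adj_x (he : e ∈ G.edgeFinset) (hu : u ∈ e) (h : g.H.Adj (g.x e u) b) :
    b ∈ g.Y e ∪ g.Z e ∪ g.L e u ∪ {g.q e 0, g.q e 1} := by
  have hk := g.partIdx_x he hu
  simp only [mem_union, mem_insert, mem_singleton]
  rcases (g.adj_iff _ _).1 h with h | h
  · rcases h with ⟨h1, -⟩ | ⟨s, hs, h1, -⟩ | ⟨w, h1, -⟩ | ⟨e', he', w, hw, h1, -⟩ |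
      ⟨e', he', w, hw, h1, hb⟩ | ⟨e', he', h1, -⟩ | ⟨e', he', i, h1, -⟩
    · simp [h1, g.partIdx_sstar] at hk
    · simp [h1, g.partIdx_of_mem_Acenters hs] at hk
    · simp [h1, g.partIdx_orig] at hk
    · simp [h1, g.partIdx_orig] at hk
    · obtain ⟨rfl, rfl⟩ := Prod.mk.inj (g.x_inj e he u hu e' he' w hw h1)
      tauto
    · simp [h1, g.partIdx_q he'] at hk
    · simp [h1, g.partIdx_q he'] at hk
  · rcases g.adjSpec_cases_of_partIdx_right h (by simp [hk]) with
      ⟨e', he', rfl, h2⟩ | ⟨e', he', i, rfl, w, hw, h2⟩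
    · simp [h2, g.partIdx_q he'] at hk
    · obtain ⟨rfl, rfl⟩ := Prod.mk.inj (g.x_inj e he u hu e' he' w hw h2)
      fin_cases i <;> simp

theorem mem_of_adj_q (he : s(u, v) ∈ G.edgeFinset) (i : Fin 2)
    (h : g.H.Adj (g.q s(u, v) i) b) :
    b ∈ g.Z s(u, v) ∪ g.L s(u, v) u ∪ g.L s(u, v) v ∪
      {g.x s(u, v) u, g.x s(u, v) v, g.q s(u, v) 0, g.q s(u, v) 1} := by
  have hk := g.partIdx_q he i
  simp only [mem_union, mem_insert, mem_singleton]
  rcases (g.adj_iff _ _).1 h with h | h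
  · rcases h with ⟨h1, -⟩ | ⟨s, hs, h1, -⟩ | ⟨w, h1, -⟩ | ⟨e', he', w, hw, h1, -⟩ |
      ⟨e', he', w, hw, h1, -⟩ | ⟨e', he', h1, rfl⟩ | ⟨e', he', j, h1, hb⟩
    · simp [h1, g.partIdx_sstar] at hk
    · simp [h1, g.partIdx_of_mem_Acenters hs] at hk
    · simp [h1, g.partIdx_orig] at hk
    · simp [h1, g.partIdx_orig] at hk
    · simp [h1, g.partIdx_x he' hw] at hk
    · obtain ⟨rfl, -⟩ := Prod.mk.inj (g.q_inj _ he i e' he' 0 h1)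
      simp
    · obtain ⟨rfl, -⟩ := Prod.mk.inj (g.q_inj _ he i e' he' j h1)
      rcases hb with hb | ⟨w, hw, hb⟩ | ⟨w, hw, hb⟩
      · simp [hb]
      all_goals rcases Sym2.mem_iff.1 hw with rfl | rfl <;> simp [hb]
  · rcases g.adjSpec_cases_of_partIdx_right h (by simp [hk]) with
      ⟨e', he', rfl, h2⟩ | ⟨e', he', j, rfl, w, hw, h2⟩
    · obtain ⟨rfl, -⟩ := Prod.mk.inj (g.q_inj _ he i e' he' 1 h2)
      simp
    · simp [h2, g.partIdx_x he' hw] at hk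

theorem mem_of_adj_orig (h : g.H.Adj (g.orig v) b) :
    b ∈ g.P v ∪ (G.edgeFinset.filter (v ∈ ·)).biUnion (fun e => g.L e v ∪ g.Y e) := by
  have hk := g.partIdx_orig v
  simp only [mem_union, mem_biUnion, mem_filter]
  rcases (g.adj_iff _ _).1 h with h | h
  · rcases h with ⟨h1, -⟩ | ⟨s, hs, h1, -⟩ | ⟨w, h1, hb⟩ |
      ⟨e', he', w, hw, h1, hb⟩ |
      ⟨e', he', w, hw, h1, -⟩ | ⟨e', he', h1, -⟩ | ⟨e', he', j, h1, -⟩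
    · simp [h1, g.partIdx_sstar] at hk
    · simp [h1, g.partIdx_of_mem_Acenters hs] at hk
    · obtain rfl := g.orig_inj h1
      exact .inl hb
    · obtain rfl := g.orig_inj h1
      exact .inr ⟨e', ⟨he', hw⟩, hb⟩
    · simp [h1, g.partIdx_x he' hw] at hk
    · simp [h1, g.partIdx_q he'] at hk
    · simp [h1, g.partIdx_q he'] at hk
  · rcases g.adjSpec_cases_of_partIdx_right h (by simp [hk]) with
      ⟨e', he', -, h2⟩ | ⟨e', he', -, -, w, hw, h2⟩
    · simp [h2, g.partIdx_q he'] at hk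
    · simp [h2, g.partIdx_x he' hw] at hk

theorem disjoint_of_partIdx {s t : Finset g.VH} {i j : Fin 10} (hs : ∀ a ∈ s, g.partIdx a = i)
    (ht : ∀ b ∈ t, g.partIdx b = j) (hij : i ≠ j) : Disjoint s t :=
  disjoint_left.2 fun a has hat => hij ((hs a has).symm.trans (ht a hat))

theorem card_nbrs_x_add_one (he : e ∈ G.edgeFinset) (hu : u ∈ e) :
    (g.Y e ∪ g.Z e ∪ g.L e u ∪ {g.q e 0, g.q e 1}).card + 1 = numColors G wt := by
  have hY : ∀ b ∈ g.Y e, g.partIdx b = 7 := fun _ => g.partIdx_of_mem_Y he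
  have hZ : ∀ b ∈ g.Z e, g.partIdx b = 8 := fun _ => g.partIdx_of_mem_Z he
  have hL : ∀ b ∈ g.L e u, g.partIdx b = 1 := fun _ => g.partIdx_of_mem_L he hu
  have hQ : ∀ b ∈ ({g.q e 0, g.q e 1} : Finset g.VH), g.partIdx b = 9 := by
    simp [g.partIdx_q he]
  have hq : g.q e 0 ≠ g.q e 1 := fun h => by simpa using g.q_inj e he 0 e he 1 h
  rw [card_union_of_disjoint (disjoint_union_left.2 ⟨disjoint_union_left.2
      ⟨g.disjoint_of_partIdx hY hQ (by decide), g.disjoint_of_partIdx hZ hQ (by decide)⟩,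
      g.disjoint_of_partIdx hL hQ (by decide)⟩),
    card_union_of_disjoint (disjoint_union_left.2
      ⟨g.disjoint_of_partIdx hY hL (by decide), g.disjoint_of_partIdx hZ hL (by decide)⟩),
    card_union_of_disjoint (g.disjoint_of_partIdx hY hZ (by decide)),
    card_pair hq, g.card_Y e he, g.card_L e he u hu]
  have := g.card_Z e he
  omega

theorem injOn_nbrs_x (he : e ∈ G.edgeFinset) (hu : u ∈ e) (hx : IsBVertex g.H c (g.x e u)) :
    Set.InjOn c ↑(g.Y e ∪ g.Z e ∪ g.L e u ∪ {g.q e 0, g.q e 1}) :=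
  hx.injOn_of_card_add_one_eq (fun _ => g.mem_of_adj_x he hu) (g.card_nbrs_x_add_one he hu)

theorem image_Y_subset_image_L (hc : ∀ ⦃a b⦄, g.H.Adj a b → c a ≠ c b)
    (he : s(u, v) ∈ G.edgeFinset) {i : Fin 2} (hx : IsBVertex g.H c (g.x s(u, v) u))
    (hq : IsBVertex g.H c (g.q s(u, v) i)) :
    (g.Y s(u, v)).image c ⊆ (g.L s(u, v) v).image c := by
  intro t ht
  obtain ⟨y, hy, rfl⟩ := mem_image.1 ht
  have hinj := g.injOn_nbrs_x he (Sym2.mem_mk_left u v) hx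
  have hyS : y ∈ g.Y s(u, v) ∪ g.Z s(u, v) ∪ g.L s(u, v) u ∪
      {g.q s(u, v) 0, g.q s(u, v) 1} := by
    simp [hy]
  have hky := g.partIdx_of_mem_Y he hy
  have hne : ∀ b, g.partIdx b ≠ 7 → b ∈ g.Y s(u, v) ∪ g.Z s(u, v) ∪ g.L s(u, v) u ∪
      {g.q s(u, v) 0, g.q s(u, v) 1} → c b ≠ c y :=
    fun b hkb hbS hcb => hkb (hinj hbS hyS hcb ▸ hky)
  have hqy : c y ≠ c (g.q s(u, v) i) :=
    (hne _ (by simp [g.partIdx_q he]) (by fin_cases i <;> simp)).symm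
  -- `q_{e,i}` sees the colour of `y`; apart from `L_{e,v}`, its neighbours lie in the rainbow
  -- neighbourhood of `x_{e,u}` or are adjacent to `y`.
  obtain ⟨b, hqb, hcb⟩ := hq (c y) hqy
  have hb := g.mem_of_adj_q he i hqb
  simp only [mem_union, mem_insert, mem_singleton] at hb
  rcases hb with ((hb | hb) | hb) | hb | hb | hb | hb
  · exact absurd hcb (hne b (by simp [g.partIdx_of_mem_Z he hb]) (by simp [hb]))
  · exact absurd hcb (hne b (by simp [g.partIdx_of_mem_L he (Sym2.mem_mk_left u v) hb])
      (by simp [hb]))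
  · exact mem_image.2 ⟨b, hb, hcb⟩
  · exact absurd (hb ▸ hcb) (hc (g.adj_x_of_mem_Y he (Sym2.mem_mk_left u v) hy))
  · exact absurd (hb ▸ hcb) (hc (g.adj_x_of_mem_Y he (Sym2.mem_mk_right u v) hy))
  · exact absurd hcb (hne b (by simp [hb, g.partIdx_q he]) (by simp [hb]))
  · exact absurd hcb (hne b (by simp [hb, g.partIdx_q he]) (by simp [hb]))

theorem not_isBVertex_q (hc : ∀ ⦃a b⦄, g.H.Adj a b → c a ≠ c b)
    (hwt : ∀ e ∈ G.edgeFinset, 1 ≤ wt e) (he : s(u, v) ∈ G.edgeFinset)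
    (hxu : IsBVertex g.H c (g.x s(u, v) u)) (hxv : IsBVertex g.H c (g.x s(u, v) v))
    (i : Fin 2) : ¬ IsBVertex g.H c (g.q s(u, v) i) := by
  intro hq
  obtain ⟨y, hy⟩ : (g.Y s(u, v)).Nonempty := by
    rw [← card_pos, g.card_Y _ he]; exact hwt _ he
  obtain ⟨l, hl, hcl⟩ :=
    mem_image.1 (g.image_Y_subset_image_L hc he hxu hq (mem_image_of_mem c hy))
  have hly := g.injOn_nbrs_x he (Sym2.mem_mk_right u v) hxv (by simp [hl]) (by simp [hy]) hcl
  have := g.partIdx_of_mem_L he (Sym2.mem_mk_right u v) hl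
  rw [hly, g.partIdx_of_mem_Y he hy] at this
  exact absurd this (by decide)

open Classical in
noncomputable def bVertices (c : g.VH → Fin (numColors G wt)) : Finset g.VH :=
  univ.filter (IsBVertex g.H c)

theorem mem_bVertices : a ∈ g.bVertices c ↔ IsBVertex g.H c a := by
  simp [bVertices]

noncomputable def bVertexCount (c : g.VH → Fin (numColors G wt)) (e : Sym2 V) : ℕ :=
  ((univ.filter (· ∈ e)).filter (g.x e · ∈ g.bVertices c)).card +
    (univ.filter (g.q e · ∈ g.bVertices c)).card

theorem bVertexCount_le_three (hc : ∀ ⦃a b⦄, g.H.Adj a b → c a ≠ c b)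
    (hwt : ∀ e ∈ G.edgeFinset, 1 ≤ wt e) (he : e ∈ G.edgeFinset) :
    g.bVertexCount c e ≤ 3 := by
  induction e using Sym2.ind with
  | _ u v =>
  unfold bVertexCount
  have hx := card_filter_le (univ.filter (· ∈ s(u, v))) (g.x s(u, v) · ∈ g.bVertices c)
  have hq := card_filter_le (univ : Finset (Fin 2)) (g.q s(u, v) · ∈ g.bVertices c)
  rw [SimpleGraph.card_filter_mem_edge he] at hx
  rw [card_univ, Fintype.card_fin] at hq
  by_cases hx2 : ((univ.filter (· ∈ s(u, v))).filter (g.x s(u, v) · ∈ g.bVertices c)).card = 2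
  · have hall := card_filter_eq_iff.1 (hx2.trans (SimpleGraph.card_filter_mem_edge he).symm)
    simp only [mem_filter, mem_univ, true_and, mem_bVertices] at hall
    have hq0 : (univ.filter (g.q s(u, v) · ∈ g.bVertices c)).card = 0 :=
      card_filter_eq_zero_iff.2 fun i _ => g.mem_bVertices.not.2 <| g.not_isBVertex_q hc hwt he
        (hall u (by simp)) (hall v (by simp)) i
    omega
  · omega

theorem exists_of_three_le_bVertexCount (he : e ∈ G.edgeFinset) (h : 3 ≤ g.bVertexCount c e) :
    (∃ u ∈ e, IsBVertex g.H c (g.x e u)) ∧ ∃ i, IsBVertex g.H c (g.q e i) := by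
  unfold bVertexCount at h
  have hx := card_filter_le (univ.filter (· ∈ e)) (g.x e · ∈ g.bVertices c)
  have hq := card_filter_le (univ : Finset (Fin 2)) (g.q e · ∈ g.bVertices c)
  rw [SimpleGraph.card_filter_mem_edge he] at hx
  rw [card_univ, Fintype.card_fin] at hq
  obtain ⟨u, hu⟩ := card_pos.1 (by omega :
    0 < ((univ.filter (· ∈ e)).filter (g.x e · ∈ g.bVertices c)).card)
  obtain ⟨i, hi⟩ := card_pos.1 (by omega : 0 < (univ.filter (g.q e · ∈ g.bVertices c)).card)
  simp only [mem_filter, mem_univ, true_and, mem_bVertices] at hu hi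
  exact ⟨⟨u, hu⟩, ⟨i, hi⟩⟩

theorem card_inter_bVertices_le_sum_bVertexCount :
    ((g.Xset ∪ g.Qset) ∩ g.bVertices c).card ≤
      ∑ e ∈ G.edgeFinset, g.bVertexCount c e := by
  refine (card_le_card (t := G.edgeFinset.biUnion fun e =>
      ((univ.filter (· ∈ e)).filter (g.x e · ∈ g.bVertices c)).image (g.x e) ∪
        (univ.filter (g.q e · ∈ g.bVertices c)).image (g.q e)) ?_).trans ?_
  · intro a ha
    simp only [mem_inter, mem_union, GadgetData.Xset, GadgetData.Qset, mem_biUnion, mem_image,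
      mem_filter, mem_insert, mem_singleton, mem_univ, true_and] at ha ⊢
    obtain ⟨⟨e, he, u, hu, rfl⟩ | ⟨e, he, rfl | rfl⟩, hb⟩ := ha
    · exact ⟨e, he, .inl ⟨u, ⟨hu, hb⟩, rfl⟩⟩
    · exact ⟨e, he, .inr ⟨0, hb, rfl⟩⟩
    · exact ⟨e, he, .inr ⟨1, hb, rfl⟩⟩
  · exact card_biUnion_le.trans <| sum_le_sum fun e _ =>
      (card_union_le _ _).trans (add_le_add card_image_le card_image_le)

theorem mem_or_mem_of_isBVertex (hwt : ∀ e ∈ G.edgeFinset, 1 ≤ wt e)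
    (hE : G.edgeFinset.Nonempty) (ha : IsBVertex g.H c a) :
    a ∈ {g.sstar} ∪ g.Acenters ∪ univ.image g.orig ∨ a ∈ g.Xset ∪ g.Qset := by
  have hmem := g.mem_part_partIdx a
  have hsmall := fun h => g.not_isBVertex_of_partIdx hwt hE (c := c) (a := a) h ha
  generalize g.partIdx a = i at hmem hsmall
  fin_cases i
  · exact .inl (mem_union_left _ (mem_union_left _ hmem))
  · exact (hsmall (by decide)).elim
  · exact .inl (mem_union_left _ (mem_union_right _ hmem))
  · exact (hsmall (by decide)).elim
  · exact .inl (mem_union_right _ hmem)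
  · exact (hsmall (by decide)).elim
  · exact .inr (mem_union_left _ hmem)
  · exact (hsmall (by decide)).elim
  · exact (hsmall (by decide)).elim
  · exact .inr (mem_union_right _ hmem)

theorem card_sstar_Acenters_orig_le :
    ({g.sstar} ∪ g.Acenters ∪ univ.image g.orig).card ≤
      2 * totW G wt + Fintype.card V + 2 := by
  have := card_union_le ({g.sstar} ∪ g.Acenters) (univ.image g.orig)
  have := card_union_le {g.sstar} g.Acenters
  have : (univ.image g.orig).card ≤ Fintype.card V := card_image_le.trans_eq card_univ
  rw [card_singleton, g.card_Acenters] at *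
  omega

theorem isBVertex_orig_and_three_le_bVertexCount (hc : IsBColoring g.H (numColors G wt) c)
    (hwt : ∀ e ∈ G.edgeFinset, 1 ≤ wt e) (hE : G.edgeFinset.Nonempty) :
    (∀ v, IsBVertex g.H c (g.orig v)) ∧ ∀ e ∈ G.edgeFinset, 3 ≤ g.bVertexCount c e := by
  set R := {g.sstar} ∪ g.Acenters ∪ univ.image g.orig
  have hcover : (univ : Finset (Fin (numColors G wt))) ⊆
      (R ∩ g.bVertices c).image c ∪ ((g.Xset ∪ g.Qset) ∩ g.bVertices c).image c := by
    intro col _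
    obtain ⟨a, rfl, ha⟩ := hc.2.2 col
    have hB := g.mem_bVertices.2 ha
    rcases g.mem_or_mem_of_isBVertex hwt hE ha with h | h
    · exact mem_union_left _ (mem_image_of_mem c (mem_inter.2 ⟨h, hB⟩))
    · exact mem_union_right _ (mem_image_of_mem c (mem_inter.2 ⟨h, hB⟩))
  have hk := (card_le_card hcover).trans
    ((card_union_le _ _).trans (add_le_add card_image_le card_image_le))
  rw [card_univ, Fintype.card_fin] at hk
  have hle : ∀ e ∈ G.edgeFinset, g.bVertexCount c e ≤ 3 :=
    fun e he => g.bVertexCount_le_three hc.1 hwt he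
  have hsum := sum_le_sum hle
  rw [sum_const, smul_eq_mul] at hsum
  have : R.card ≤ 2 * totW G wt + Fintype.card V + 2 := g.card_sstar_Acenters_orig_le
  have := g.card_inter_bVertices_le_sum_bVertexCount (c := c)
  have := card_le_card (inter_subset_left (s₁ := R) (s₂ := g.bVertices c))
  unfold numColors at hk
  constructor
  · intro v
    have hRR : R ∩ g.bVertices c = R :=
      eq_of_subset_of_card_le inter_subset_left (by omega)
    have hv : g.orig v ∈ R := mem_union_right _ (mem_image_of_mem _ (mem_univ v))
    exact g.mem_bVertices.1 (mem_inter.1 (hRR ▸ hv)).2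
  · have := (sum_eq_sum_iff_of_le hle).1 (by rw [sum_const, smul_eq_mul]; omega)
    exact fun e he => (this e he).ge

open Classical in
noncomputable def orientation (c : g.VH → Fin (numColors G wt)) (e : Sym2 V) : V :=
  if h : ∃ u ∈ e, IsBVertex g.H c (g.x e u) then h.choose else e.out.1

theorem orientation_mem (e : Sym2 V) : g.orientation c e ∈ e := by
  unfold orientation
  split_ifs with h
  exacts [h.choose_spec.1, e.out_fst_mem]

theorem isBVertex_x_orientation (h : ∃ u ∈ e, IsBVertex g.H c (g.x e u)) :
    IsBVertex g.H c (g.x e (g.orientation c e)) := by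
  unfold orientation
  rw [dif_pos h]
  exact h.choose_spec.2

theorem card_image_L_union_Y_add_le (hc : ∀ ⦃a b⦄, g.H.Adj a b → c a ≠ c b)
    (he : e ∈ G.edgeFinset) (hv : v ∈ e) (hcount : 3 ≤ g.bVertexCount c e) :
    ((g.L e v ∪ g.Y e).image c).card + (if g.orientation c e ≠ v then wt e else 0) ≤
      2 * wt e := by
  have hL := g.card_L e he v hv
  have hY := g.card_Y e he
  have hLY : ((g.L e v ∪ g.Y e).image c).card ≤ (g.L e v).card + (g.Y e).card :=
    card_image_le.trans (card_union_le _ _)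
  split_ifs with hov
  · obtain ⟨hx, i, hq⟩ := g.exists_of_three_le_bVertexCount he hcount
    have hx := g.isBVertex_x_orientation hx
    have heq : e = s(g.orientation c e, v) :=
      (Sym2.mem_and_mem_iff hov).1 ⟨g.orientation_mem e, hv⟩
    generalize g.orientation c e = u at hx heq
    subst heq
    have := card_le_card (union_subset subset_rfl (g.image_Y_subset_image_L hc he hx hq))
    rw [← image_union] at this
    have := card_image_le (s := g.L s(u, v) v) (f := c)
    omega
  · omega

theorem two_mul_outW_orientation_le (hc : IsBColoring g.H (numColors G wt) c)
    (hwt : ∀ e ∈ G.edgeFinset, 1 ≤ wt e) (hE : G.edgeFinset.Nonempty) (v : V) :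
    2 * outW G wt (g.orientation c) v ≤ vertW G wt v := by
  obtain ⟨horig, hcount⟩ := g.isBVertex_orig_and_three_le_bVertexCount hc hwt hE
  have hcolors : numColors G wt - 1 ≤ (g.P v).card +
      ∑ e ∈ G.edgeFinset.filter (v ∈ ·), ((g.L e v ∪ g.Y e).image c).card := by
    have := (horig v).sub_one_le_card_image fun _ => g.mem_of_adj_orig
    rw [image_union, biUnion_image] at this
    exact this.trans ((card_union_le _ _).trans (add_le_add card_image_le card_biUnion_le))
  have hedges : ∑ e ∈ G.edgeFinset.filter (v ∈ ·), (((g.L e v ∪ g.Y e).image c).card +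
      if g.orientation c e ≠ v then wt e else 0) ≤
        ∑ e ∈ G.edgeFinset.filter (v ∈ ·), 2 * wt e :=
    sum_le_sum fun e he => g.card_image_L_union_Y_add_le hc.1 (mem_filter.1 he).1
      (mem_filter.1 he).2 (hcount e (mem_filter.1 he).1)
  have hout : outW G wt (g.orientation c) v = ∑ e ∈ G.edgeFinset.filter (v ∈ ·),
      if g.orientation c e ≠ v then wt e else 0 := by
    rw [outW, ← sum_filter, filter_filter]
  rw [sum_add_distrib, ← hout, ← mul_sum] at hedges
  have := g.card_P v
  unfold vertW at this ⊢
  omega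

end Gadget

theorem bColoring_gives_circulating_orientation_general
    {V : Type*} [Fintype V] [DecidableEq V] (G : SimpleGraph V) [DecidableRel G.Adj]
    (wt : Sym2 V → ℕ)
    (hwt : ∀ e ∈ G.edgeFinset, 1 ≤ wt e)
    (g : Gadget V G wt)
    (hbc : ∃ c : g.VH → Fin (numColors G wt), IsBColoring g.H (numColors G wt) c) :
    ∃ o : Sym2 V → V, IsCirculating G wt o := by
  obtain ⟨c, hc⟩ := hbc
  refine ⟨g.orientation c, isCirculating_of_two_mul_outW_le (fun e _ => g.orientation_mem e)
    fun v => ?_⟩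
  rcases G.edgeFinset.eq_empty_or_nonempty with hE | hE
  · simp [outW, hE]
  · exact g.two_mul_outW_orientation_le hc hwt hE v

/-- If the constructed graph `H` admits a b-coloring with
`k = 2W + 3m + n + 2` colors, then `(G, wt)` admits a circulating orientation. -/
theorem bColoring_gives_circulating_orientation
    {V : Type*} [Fintype V] [DecidableEq V] (G : SimpleGraph V) [DecidableRel G.Adj]
    (wt : Sym2 V → ℕ) (hconn : G.Connected)
    (hwt : ∀ e ∈ G.edgeFinset, 1 ≤ wt e)
    (heven : ∀ v : V, Even (vertW G wt v))
    (g : Gadget V G wt)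
    (hbc : ∃ c : g.VH → Fin (numColors G wt), IsBColoring g.H (numColors G wt) c) :
    ∃ o : Sym2 V → V, IsCirculating G wt o :=
  bColoring_gives_circulating_orientation_general G wt hwt g hbc
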